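/- arXiv:2203.15167 — 4 statements merged into one kernel-verified Lean document; each statement's English description precedes it below -/
import Mathlib

section
/- For the chain P_n with P_n(i,i−1)=1 for i ≥ 1, P_n(0,0)=1−1/(n+1), P_n(0,n)=1/(n+1), one has sup_{n≥1} [P_n^m(0,0) − π_n(0)] ≥ 1/2 for every m ≥ 1; in particular uniform-in-n convergence to stationarity fails even though the expected return time to {0} from 0 is at most 2 for all n. -/
open scoped BigOperators

/-- The transition matrix of Example 2: `P_n(i,i-1) = 1` for `i ≥ 1`,
`P_n(0,0) = 1 - 1/(n+1)`, `P_n(0,n) = 1/(n+1)`. -/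
noncomputable def counterP (n : ℕ) (i j : ℕ) : ℝ :=
  if i = 0 then
    (if j = 0 then 1 - 1/(n+1) else if j = n then 1/(n+1) else 0)
  else
    (if j = i - 1 then 1 else 0)

/-- `m`-step transition probabilities of `counterP n`. -/
noncomputable def counterPpow (n : ℕ) : ℕ → ℕ → ℕ → ℝ
  | 0 => fun i j => if i = j then 1 else 0
  | m + 1 => fun i j => ∑' k, counterPpow n m i k * counterP n k j


open Filter Topology

lemma one_div_natCast_add_one_le_one (n : ℕ) : 1 / ((n : ℝ) + 1) ≤ 1 :=
  (div_le_one (by positivity)).2 (by linarith [(n.cast_nonneg : (0 : ℝ) ≤ n)])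

namespace counterP

variable {n : ℕ}

lemma zero_zero : counterP n 0 0 = 1 - 1 / ((n : ℝ) + 1) := by
  simp [counterP]

lemma succ_self (j : ℕ) : counterP n (j + 1) j = 1 := by
  simp [counterP]

lemma nonneg (i j : ℕ) : 0 ≤ counterP n i j := by
  unfold counterP
  have hpos : (0 : ℝ) ≤ 1 / ((n : ℝ) + 1) := by positivity
  split_ifs <;> linarith [one_div_natCast_add_one_le_one n]

lemma eq_zero_of_lt (j : ℕ) (hj : n < j) : counterP n 0 j = 0 := by
  have hj0 : j ≠ 0 := by omega
  simp [counterP, hj0, hj.ne']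

lemma sum_range_zero (hn : n ≠ 0) : ∑ j ∈ Finset.range (n + 1), counterP n 0 j = 1 := by
  have hinit : ∑ j ∈ Finset.range n, counterP n 0 j = counterP n 0 0 := by
    refine Finset.sum_eq_single 0 (fun j hj hj0 => ?_) (by simp [Nat.pos_of_ne_zero hn])
    simp [counterP, hj0, (Finset.mem_range.1 hj).ne]
  rw [Finset.sum_range_succ, hinit, zero_zero]
  simp [counterP, hn]

end counterP

namespace counterPpow

open counterP

variable {n : ℕ}

lemma nonneg (m i j : ℕ) : 0 ≤ counterPpow n m i j := by
  induction m generalizing j with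
  | zero => simp only [counterPpow]; split_ifs <;> norm_num
  | succ m ih => exact tsum_nonneg fun k => mul_nonneg (ih k) (counterP.nonneg k j)

/-- Only the states `0` and `j + 1` lead to `j`. -/
lemma succ (m i j : ℕ) :
    counterPpow n (m + 1) i j = counterPpow n m i 0 * counterP n 0 j + counterPpow n m i (j + 1) := by
  have hzero : ∀ k ∉ ({0, j + 1} : Finset ℕ), counterPpow n m i k * counterP n k j = 0 := by
    intro k hk
    simp only [Finset.mem_insert, Finset.mem_singleton, not_or] at hk
    have : j ≠ k - 1 := by omega
    simp [counterP, hk.1, this]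
  change ∑' k, counterPpow n m i k * counterP n k j = _
  rw [tsum_eq_sum hzero, Finset.sum_pair (by omega), succ_self, mul_one]

lemma eq_zero_of_lt (m : ℕ) {i j : ℕ} (hi : i ≤ n) (hj : n < j) : counterPpow n m i j = 0 := by
  induction m generalizing j with
  | zero =>
    have hij : i ≠ j := by omega
    simp [counterPpow, hij]
  | succ m ih => rw [succ, counterP.eq_zero_of_lt j hj, mul_zero, ih (by omega), add_zero]

lemma sum_range (hn : n ≠ 0) (m : ℕ) {i : ℕ} (hi : i ≤ n) :
    ∑ j ∈ Finset.range (n + 1), counterPpow n m i j = 1 := by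
  induction m with
  | zero => simp [counterPpow, Nat.lt_succ_of_le hi]
  | succ m ih =>
    have hshift : ∑ j ∈ Finset.range (n + 1), counterPpow n m i (j + 1) =
        1 - counterPpow n m i 0 := by
      have h := Finset.sum_range_succ' (counterPpow n m i) (n + 1)
      rw [Finset.sum_range_succ, ih, eq_zero_of_lt m hi (by omega : n < n + 1)] at h
      linarith
    simp only [succ, Finset.sum_add_distrib, ← Finset.mul_sum, sum_range_zero hn, hshift]
    ring

lemma le_one (hn : n ≠ 0) (m : ℕ) {i : ℕ} (hi : i ≤ n) (j : ℕ) : counterPpow n m i j ≤ 1 := by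
  rcases le_or_gt j n with hj | hj
  · rw [← sum_range hn m hi]
    exact Finset.single_le_sum (fun k _ => nonneg m i k) (Finset.mem_range.2 (by omega))
  · rw [eq_zero_of_lt m hi hj]
    exact zero_le_one

/-- Staying at `0` for `m` steps. -/
lemma pow_le_zero_zero (m : ℕ) : (1 - 1 / ((n : ℝ) + 1)) ^ m ≤ counterPpow n m 0 0 := by
  induction m with
  | zero => simp [counterPpow]
  | succ m ih =>
    rw [succ, zero_zero, pow_succ]
    have hstay : 0 ≤ 1 - 1 / ((n : ℝ) + 1) := sub_nonneg.2 (one_div_natCast_add_one_le_one n)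
    nlinarith [nonneg (n := n) m 0 1]

end counterPpow

/-- For every `m ≥ 1`,
`sup_{n ≥ 1} [P_n^m(0,0) - π_n(0)] ≥ 1/2`, so uniform-in-`n` convergence to stationarity
fails, even though the expected return time to `{0}` from `0`, namely
`1·(1 - 1/(n+1)) + (n+1)·(1/(n+1))`, is at most `2` for all `n ≥ 1`. -/
theorem counterP_no_uniform_convergence :
    (∀ m : ℕ, 1 ≤ m →
      (1/2 : ℝ) ≤ ⨆ n : {n : ℕ // 1 ≤ n},
        (counterPpow n m 0 0 - (2 - 1/((n : ℝ) + 1))⁻¹)) ∧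
    (∀ n : ℕ, 1 ≤ n →
      1 * (1 - 1/((n : ℝ) + 1)) + ((n : ℝ) + 1) * (1/((n : ℝ) + 1)) ≤ 2) := by
  refine ⟨fun m _ => ?_, fun n _ => ?_⟩
  · -- Needed for `le_ciSup`: the `⨆` of an unbounded family of reals is `0`.
    have hbdd : BddAbove (Set.range fun n : {n : ℕ // 1 ≤ n} =>
        counterPpow n m 0 0 - (2 - 1 / ((n : ℝ) + 1))⁻¹) := by
      refine ⟨1, ?_⟩
      rintro _ ⟨n, rfl⟩
      have hπ : 0 ≤ (2 - 1 / ((n : ℝ) + 1))⁻¹ :=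
        inv_nonneg.2 (by linarith [one_div_natCast_add_one_le_one n])
      linarith [counterPpow.le_one (by omega : (n : ℕ) ≠ 0) m (Nat.zero_le n) 0]
    -- `P_n^m(0,0) - π_n(0) ≥ (1 - ε)^m - (2 - ε)⁻¹` with `ε = 1/(n+1) → 0`.
    have hε := tendsto_one_div_add_atTop_nhds_zero_nat (𝕜 := ℝ)
    have hlim : Tendsto (fun n : ℕ => (1 - 1 / ((n : ℝ) + 1)) ^ m - (2 - 1 / ((n : ℝ) + 1))⁻¹)
        atTop (𝓝 (1 / 2)) := by
      convert ((tendsto_const_nhds.sub hε).pow m).sub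
        ((tendsto_const_nhds.sub hε).inv₀ (by norm_num : (2 : ℝ) - 0 ≠ 0)) using 2
      norm_num
    refine le_of_tendsto hlim (eventually_atTop.2 ⟨1, fun n hn => ?_⟩)
    exact (sub_le_sub_right (counterPpow.pow_le_zero_zero m) _).trans
      (le_ciSup hbdd (⟨n, hn⟩ : {n : ℕ // 1 ≤ n}))
  · rw [mul_one_div_cancel (by positivity), one_mul]
    linarith [(by positivity : (0 : ℝ) < 1 / ((n : ℝ) + 1))]
end

section
/- Let π be a probability distribution on ℤ≥0 with π(x) > 0 for all x, let P̄(x) = ∑_{y≥x} π(y), and define r(x) = P̄(x)^{-1/2}. Then r is nonnegative, nondecreasing, coercive (r(x) → ∞), and ∑_{k=0}^∞ r(k) π(k) ≤ 2. -/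
/-!
Since `π k = P̄ k - P̄ (k + 1)`, the term `r k * π k = (P̄ k - P̄ (k + 1)) / √(P̄ k)` is at most
`2 * (√(P̄ k) - √(P̄ (k + 1)))`, a discrete form of `∫ u^(-1/2) du = 2 √u`. The sum therefore
telescopes to at most `2 * √(P̄ 0) = 2`.
-/

open Filter Topology

theorem tsum_ite_le_eq_tsum_nat_add {M : Type*} [AddCommMonoid M] [TopologicalSpace M]
    (f : ℕ → M) (x : ℕ) :
    (∑' y, if x ≤ y then f y else 0) = ∑' y, f (y + x) := by
  rw [← (add_left_injective x).tsum_eq]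
  · simp
  · intro y hy
    have hxy : x ≤ y := by by_contra h; simp [h] at hy
    exact ⟨y - x, Nat.sub_add_cancel hxy⟩

theorem Summable.tsum_nat_add_eq_add_tsum_nat_add_succ {G : Type*} [AddCommGroup G]
    [TopologicalSpace G] [IsTopologicalAddGroup G] [T2Space G] {f : ℕ → G} (hf : Summable f)
    (x : ℕ) :
    ∑' y, f (y + x) = f x + ∑' y, f (y + (x + 1)) := by
  rw [((summable_nat_add_iff x).2 hf).tsum_eq_zero_add, zero_add]
  simp only [add_right_comm _ 1 x, add_assoc]

section RealTail

variable {f : ℕ → ℝ}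

theorem Summable.tsum_nat_add_pos (hf : Summable f) (hf_nonneg : ∀ n, 0 ≤ f n) {x : ℕ}
    (hx : 0 < f x) : 0 < ∑' y, f (y + x) :=
  ((summable_nat_add_iff x).2 hf).tsum_pos (fun y => hf_nonneg _) 0 (by rwa [zero_add])

theorem Summable.antitone_tsum_nat_add (hf : Summable f) (hf_nonneg : ∀ n, 0 ≤ f n) :
    Antitone fun x => ∑' y, f (y + x) :=
  antitone_nat_of_succ_le fun x => by
    rw [hf.tsum_nat_add_eq_add_tsum_nat_add_succ x]
    exact le_add_of_nonneg_left (hf_nonneg x)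

end RealTail

theorem Real.sub_div_sqrt_le_two_mul_sub_sqrt {a b : ℝ} (hb : 0 ≤ b) (hba : b ≤ a) :
    (a - b) / √a ≤ 2 * (√a - √b) := by
  rcases (hb.trans hba).eq_or_lt with rfl | ha
  · obtain rfl := le_antisymm hba hb
    simp
  have hsa : 0 < √a := Real.sqrt_pos.2 ha
  have hsb : √b ≤ √a := Real.sqrt_le_sqrt hba
  rw [div_le_iff₀ hsa]
  -- `a - b = (√a - √b)(√a + √b)` and `√a + √b ≤ 2√a`
  nlinarith [Real.mul_self_sqrt (hb.trans hba), Real.mul_self_sqrt hb, Real.sqrt_nonneg b]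

theorem Antitone.tsum_sub_div_sqrt_le {P : ℕ → ℝ} (hP : Antitone P) (hP_nonneg : ∀ n, 0 ≤ P n) :
    ∑' k, (P k - P (k + 1)) / √(P k) ≤ 2 * √(P 0) := by
  have hstep (k : ℕ) : P (k + 1) ≤ P k := hP k.le_succ
  refine Real.tsum_le_of_sum_range_le
    (fun k => div_nonneg (sub_nonneg.2 (hstep k)) (Real.sqrt_nonneg _)) fun n => ?_
  calc ∑ k ∈ Finset.range n, (P k - P (k + 1)) / √(P k)
      ≤ ∑ k ∈ Finset.range n, 2 * (√(P k) - √(P (k + 1))) :=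
        Finset.sum_le_sum fun k _ =>
          Real.sub_div_sqrt_le_two_mul_sub_sqrt (hP_nonneg _) (hstep k)
    _ = 2 * (√(P 0) - √(P n)) := by
        rw [← Finset.mul_sum, Finset.sum_range_sub' (fun k => √(P k))]
    _ ≤ 2 * √(P 0) := by linarith [Real.sqrt_nonneg (P n)]

theorem Real.rpow_neg_half_mul_eq_div_sqrt {x : ℝ} (hx : 0 ≤ x) (y : ℝ) :
    x ^ (-(1 / 2) : ℝ) * y = y / √x := by
  rw [Real.rpow_neg hx, ← Real.sqrt_eq_rpow, inv_mul_eq_div]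

/-- If `π` is a probability on `ℤ₊` with `π(x) > 0` for all `x`,
`P̄(x) = ∑_{y ≥ x} π(y)` and `r(x) = P̄(x)^{-1/2}`, then `r` is nonnegative,
nondecreasing and coercive (`r(x) → ∞`), and `∑_k r(k) π(k) ≤ 2`. -/
theorem tail_sqrt_moment
    (π : ℕ → ℝ) (hπ_pos : ∀ x, 0 < π x) (hπ_prob : HasSum π 1)
    (Pbar : ℕ → ℝ) (hPbar : ∀ x, Pbar x = ∑' y, if x ≤ y then π y else 0)
    (r : ℕ → ℝ) (hr : ∀ x, r x = (Pbar x) ^ (-(1/2) : ℝ)) :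
    (∀ x, 0 ≤ r x) ∧ Monotone r ∧ Tendsto r atTop atTop ∧
      ∑' k, r k * π k ≤ 2 := by
  have hsum : Summable π := hπ_prob.summable
  have hπ_nonneg (x : ℕ) : 0 ≤ π x := (hπ_pos x).le
  obtain rfl : Pbar = fun x => ∑' y, π (y + x) :=
    funext fun x => (hPbar x).trans (tsum_ite_le_eq_tsum_nat_add π x)
  set P := fun x => ∑' y, π (y + x)
  have hP_pos (x : ℕ) : 0 < P x := hsum.tsum_nat_add_pos hπ_nonneg (hπ_pos x)
  have hP_anti : Antitone P := hsum.antitone_tsum_nat_add hπ_nonneg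
  have hπ_eq (x : ℕ) : π x = P x - P (x + 1) := by
    simp only [P, hsum.tsum_nat_add_eq_add_tsum_nat_add_succ x, add_sub_cancel_right]
  have hP_zero : P 0 = 1 := by simpa [P] using hπ_prob.tsum_eq
  obtain rfl : r = fun x => P x ^ (-(1 / 2) : ℝ) := funext hr
  refine ⟨fun x => Real.rpow_nonneg (hP_pos x).le _,
    fun x y hxy => Real.rpow_le_rpow_of_nonpos (hP_pos y) (hP_anti hxy) (by norm_num),
    (tendsto_rpow_neg_nhdsGT_zero (by norm_num)).comp
      (tendsto_nhdsWithin_iff.2 ⟨tendsto_sum_nat_add π, .of_forall hP_pos⟩), ?_⟩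
  calc ∑' k, P k ^ (-(1 / 2) : ℝ) * π k = ∑' k, (P k - P (k + 1)) / √(P k) := by
        simp only [Real.rpow_neg_half_mul_eq_div_sqrt (hP_pos _).le, ← hπ_eq]
    _ ≤ 2 * √(P 0) := hP_anti.tsum_sub_div_sqrt_le fun n => (hP_pos n).le
    _ = 2 := by rw [hP_zero, Real.sqrt_one, mul_one]
end

section
/- Let X be strongly uniformly recurrent under P (P(x,dy) ≥ λφ(dy) for all x) with unique stationary distribution π, and let P_n be arbitrary general augmentations associated with any increasing truncation sequence A_n ↑ S, with φ supported on A_1. Then each P_n is strongly uniformly recurrent with unique stationary distribution π_n, and sup_{A⊆S} |π_n(A) − π(A)| → 0 as n → ∞. -/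
/-!
On `A` the minorization splits `K x = λ φ + Q x` with a residual kernel `Q` of mass `1 - λ`
(Nummelin splitting). An invariant law `μ` carried by `A` satisfies `μ = λ φ + μ Q`; iterating
gives `μ ≥ λ ∑ₖ φ Qᵏ`, and the right-hand side is already a probability measure, so
`μ = λ ∑ₖ φ Qᵏ`. This gives existence and uniqueness of `πₙ`, and identifies `π` as well.

For the convergence, let `R` and `Qₙ` be the residual kernels of `P` and `Pₙ`. Split `φ Rᵏ` into
the part carried by paths that stayed in `Aₙ`, dominated by `φ Qₙᵏ` because the augmentation only
adds mass inside `Aₙ`, and the part carried by paths that have left `Aₙ`, whose mass `eₖ` obeys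
`eₖ₊₁ ≤ (1 - λ) eₖ + φ Rᵏ⁺¹ (Aₙᶜ)`. Summing, `λ ∑ₖ eₖ ≤ ∑ₖ φ Rᵏ (Aₙᶜ) = λ⁻¹ π (Aₙᶜ)`, so
`π B ≤ πₙ B + λ⁻¹ π (Aₙᶜ)` for all `B`; applied to `Bᶜ` too, this bounds the total variation
distance by `λ⁻¹ π (Aₙᶜ) → 0`.
-/

open MeasureTheory ProbabilityTheory Filter Topology
open scoped ENNReal

namespace MeasureTheory.Measure

variable {S : Type*} [MeasurableSpace S]

lemma comp_mono {μ ν : Measure S} {κ η : Kernel S S} (hμν : μ ≤ ν)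
    (hκη : ∀ᵐ x ∂μ, κ x ≤ η x) : κ ∘ₘ μ ≤ η ∘ₘ ν :=
  Measure.le_iff.mpr fun B hB => by
    rw [bind_apply hB κ.aemeasurable, bind_apply hB η.aemeasurable]
    exact (lintegral_mono_ae (hκη.mono fun x hx => hx B)).trans (lintegral_mono' hμν le_rfl)

lemma comp_sum_apply (κ : Kernel S S) (μ : ℕ → Measure S) {B : Set S} (hB : MeasurableSet B) :
    (κ ∘ₘ Measure.sum μ) B = ∑' k, (κ ∘ₘ μ k) B := by
  rw [bind_sum _ _ κ.aemeasurable, sum_apply _ hB]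

end MeasureTheory.Measure

namespace ENNReal

lemma tsum_one_sub_pow {a : ℝ≥0∞} (ha : a ≤ 1) : ∑' k, (1 - a) ^ k = a⁻¹ := by
  rw [ENNReal.tsum_geometric, ENNReal.sub_sub_cancel ENNReal.one_ne_top ha]

lemma mul_tsum_eq_tsum_of_succ_eq {a e : ℕ → ℝ≥0∞} {c : ℝ≥0∞} (hc : c ≤ 1) (h0 : a 0 = 0)
    (hsucc : ∀ k, a (k + 1) = (1 - c) * a k + e k) (hfin : ∑' k, a k ≠ ∞) :
    c * ∑' k, a k = ∑' k, e k := by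
  have hrec : ∑' k, a k = (1 - c) * ∑' k, a k + ∑' k, e k := by
    conv_lhs => rw [tsum_eq_zero_add' ENNReal.summable, h0, zero_add, tsum_congr hsucc]
    rw [ENNReal.tsum_add, ENNReal.tsum_mul_left]
  have hsplit : c * ∑' k, a k + (1 - c) * ∑' k, a k = ∑' k, a k := by
    rw [← add_mul, add_tsub_cancel_of_le hc, one_mul]
  have h := hsplit.trans hrec
  rw [add_comm ((1 - c) * _)] at h
  exact (ENNReal.add_left_inj (mul_ne_top (by finiteness) hfin)).mp h

end ENNReal

namespace MeasureTheory

variable {S : Type*} [MeasurableSpace S]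

lemma abs_toReal_sub_le_of_forall_le_add {μ ν : Measure S} [IsProbabilityMeasure μ]
    [IsProbabilityMeasure ν] {ε : ℝ≥0∞} (hε : ε ≠ ∞)
    (h : ∀ B, MeasurableSet B → ν B ≤ μ B + ε) {B : Set S} (hB : MeasurableSet B) :
    |(μ B).toReal - (ν B).toReal| ≤ ε.toReal := by
  have hreal : ∀ C, MeasurableSet C → ν.real C ≤ μ.real C + ε.toReal := fun C hC => by
    simpa [measureReal_def, ENNReal.toReal_add (measure_ne_top μ C) hε] using
      ENNReal.toReal_mono (by finiteness) (h C hC)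
  have h1 := hreal B hB
  have h2 := hreal Bᶜ hB.compl
  rw [probReal_compl_eq_one_sub hB, probReal_compl_eq_one_sub hB] at h2
  simp only [measureReal_def] at h1 h2
  rw [abs_sub_le_iff]
  constructor <;> linarith

lemma tendsto_iSup_abs_sub_of_forall_le_add {μ : ℕ → Measure S} {ν : Measure S}
    (hμ : ∀ n, IsProbabilityMeasure (μ n)) [IsProbabilityMeasure ν] {ε : ℕ → ℝ≥0∞}
    (hε : Tendsto ε atTop (𝓝 0)) (h : ∀ n B, MeasurableSet B → ν B ≤ μ n B + ε n) :
    Tendsto (fun n => ⨆ (B : Set S) (_ : MeasurableSet B), |(μ n B).toReal - (ν B).toReal|)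
      atTop (𝓝 0) := by
  have hε_ne_top : ∀ᶠ n in atTop, ε n ≠ ∞ :=
    hε.eventually (gt_mem_nhds ENNReal.zero_lt_top) |>.mono fun _ hn => hn.ne
  refine squeeze_zero' (Eventually.of_forall fun n => Real.iSup_nonneg fun B =>
    Real.iSup_nonneg fun _ => abs_nonneg _) (hε_ne_top.mono fun n hn => ?_)
    ((ENNReal.tendsto_toReal ENNReal.zero_ne_top).comp hε)
  exact Real.iSup_le (fun B => Real.iSup_le (fun hB =>
    abs_toReal_sub_le_of_forall_le_add (μ := μ n) hn (h n) hB) ENNReal.toReal_nonneg)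
    ENNReal.toReal_nonneg

end MeasureTheory

namespace ProbabilityTheory.Kernel

variable {S : Type*} [MeasurableSpace S]

noncomputable def iterComp (κ : Kernel S S) (μ : Measure S) (k : ℕ) : Measure S :=
  ⇑(κ ^ k) ∘ₘ μ

section iterComp

variable (κ : Kernel S S) (μ : Measure S) (k : ℕ)

@[simp] lemma iterComp_zero : κ.iterComp μ 0 = μ := Measure.id_comp

lemma iterComp_succ : κ.iterComp μ (k + 1) = κ ∘ₘ κ.iterComp μ k := by
  rw [iterComp, iterComp, pow_succ']
  exact Measure.comp_assoc.symm

lemma iterComp_succ' : κ.iterComp μ (k + 1) = κ.iterComp (κ ∘ₘ μ) k := by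
  rw [iterComp, iterComp, pow_succ]
  exact Measure.comp_assoc.symm

lemma iterComp_add (ν : Measure S) :
    κ.iterComp (μ + ν) k = κ.iterComp μ k + κ.iterComp ν k :=
  Measure.comp_add

lemma iterComp_smul (c : ℝ≥0∞) : κ.iterComp (c • μ) k = c • κ.iterComp μ k :=
  Measure.comp_smul c

end iterComp

structure IsStronglyUniformlyRecurrentOn (K : Kernel S S) (lam : ℝ≥0∞) (φ : Measure S)
    (A : Set S) : Prop where
  measurableSet : MeasurableSet A
  measure_compl : φ Aᶜ = 0
  lam_pos : 0 < lam
  minorization : ∀ x ∈ A, ∀ B, MeasurableSet B → lam * φ B ≤ K x B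
  apply_self : ∀ x ∈ A, K x A = 1

namespace IsStronglyUniformlyRecurrentOn

variable {K : Kernel S S} {lam : ℝ≥0∞} {φ : Measure S} {A : Set S} {x : S} {B : Set S}

lemma of_le {P : Kernel S S} (hA : MeasurableSet A) (hφ : φ Aᶜ = 0) (hlam : 0 < lam)
    (hP : ∀ x, ∀ B, MeasurableSet B → lam * φ B ≤ P x B) (hK : ∀ x ∈ A, K x A = 1)
    (hge : ∀ x ∈ A, ∀ B ⊆ A, MeasurableSet B → P x B ≤ K x B) :
    IsStronglyUniformlyRecurrentOn K lam φ A where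
  measurableSet := hA
  measure_compl := hφ
  lam_pos := hlam
  apply_self := hK
  minorization x hx B hB :=
    calc lam * φ B = lam * φ (B ∩ A) := by rw [measure_inter_conull hφ]
      _ ≤ P x (B ∩ A) := hP x _ (hB.inter hA)
      _ ≤ K x (B ∩ A) := hge x hx _ Set.inter_subset_right (hB.inter hA)
      _ ≤ K x B := measure_mono Set.inter_subset_left

lemma measure_self [IsProbabilityMeasure φ] (h : IsStronglyUniformlyRecurrentOn K lam φ A) :
    φ A = 1 := by
  rw [← prob_compl_eq_zero_iff h.measurableSet, h.measure_compl]

lemma lam_le_one [IsMarkovKernel K] [IsProbabilityMeasure φ]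
    (h : IsStronglyUniformlyRecurrentOn K lam φ A) : lam ≤ 1 := by
  obtain ⟨x, hx⟩ := nonempty_of_measure_ne_zero (h.measure_self.trans_ne one_ne_zero)
  simpa using h.minorization x hx Set.univ MeasurableSet.univ

lemma lam_ne_top [IsMarkovKernel K] [IsProbabilityMeasure φ]
    (h : IsStronglyUniformlyRecurrentOn K lam φ A) : lam ≠ ∞ :=
  ne_top_of_le_ne_top ENNReal.one_ne_top h.lam_le_one

lemma isFiniteMeasure_smul [IsMarkovKernel K] [IsProbabilityMeasure φ]
    (h : IsStronglyUniformlyRecurrentOn K lam φ A) : IsFiniteMeasure (lam • φ) :=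
  ⟨by simpa using h.lam_ne_top.lt_top⟩

lemma smul_le (h : IsStronglyUniformlyRecurrentOn K lam φ A) (hx : x ∈ A) : lam • φ ≤ K x :=
  Measure.le_iff.mpr fun B hB => h.minorization x hx B hB

lemma apply_compl [IsMarkovKernel K] (h : IsStronglyUniformlyRecurrentOn K lam φ A)
    (hx : x ∈ A) : K x Aᶜ = 0 := by
  rw [prob_compl_eq_zero_iff h.measurableSet]
  exact h.apply_self x hx

lemma sub_apply [IsMarkovKernel K] [IsProbabilityMeasure φ]
    (h : IsStronglyUniformlyRecurrentOn K lam φ A) (hx : x ∈ A) (hB : MeasurableSet B) :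
    (K x - lam • φ) B = K x B - lam * φ B := by
  have := h.isFiniteMeasure_smul
  rw [Measure.sub_apply hB (h.smul_le hx), Measure.smul_apply, smul_eq_mul]

-- Zero off `A`, so that measurability only needs the minorization on `A`.
open Classical in
noncomputable def residual [IsMarkovKernel K] [IsProbabilityMeasure φ]
    (h : IsStronglyUniformlyRecurrentOn K lam φ A) : Kernel S S where
  toFun x := if x ∈ A then K x - lam • φ else 0
  measurable' := by
    refine Measure.measurable_of_measurable_coe _ fun B hB => ?_
    have hcoe : (fun x => (if x ∈ A then K x - lam • φ else 0 : Measure S) B) =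
        fun x => if x ∈ A then K x B - lam * φ B else 0 := by
      ext x
      split_ifs with hx
      · exact h.sub_apply hx hB
      · rfl
    rw [hcoe]
    exact Measurable.ite h.measurableSet ((K.measurable_coe hB).sub_const _) measurable_const

variable [IsMarkovKernel K] [IsProbabilityMeasure φ] {μ : Measure S}

lemma residual_apply_of_mem (h : IsStronglyUniformlyRecurrentOn K lam φ A) (hx : x ∈ A) :
    h.residual x = K x - lam • φ :=
  if_pos hx

lemma residual_apply_of_notMem (h : IsStronglyUniformlyRecurrentOn K lam φ A) (hx : x ∉ A) :
    h.residual x = 0 :=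
  if_neg hx

lemma residual_add_smul (h : IsStronglyUniformlyRecurrentOn K lam φ A) (hx : x ∈ A) :
    h.residual x + lam • φ = K x := by
  have := h.isFiniteMeasure_smul
  rw [h.residual_apply_of_mem hx, Measure.sub_add_cancel_of_le (h.smul_le hx)]

lemma residual_le (h : IsStronglyUniformlyRecurrentOn K lam φ A) (x : S) :
    h.residual x ≤ K x := by
  by_cases hx : x ∈ A
  · rw [h.residual_apply_of_mem hx]; exact Measure.sub_le
  · rw [h.residual_apply_of_notMem hx]; exact Measure.zero_le _

lemma residual_apply_univ (h : IsStronglyUniformlyRecurrentOn K lam φ A) (hx : x ∈ A) :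
    h.residual x Set.univ = 1 - lam := by
  rw [h.residual_apply_of_mem hx, h.sub_apply hx MeasurableSet.univ]
  simp

lemma residual_apply_compl (h : IsStronglyUniformlyRecurrentOn K lam φ A) (hx : x ∈ A) :
    h.residual x Aᶜ = 0 :=
  le_antisymm ((h.residual_le x Aᶜ).trans (h.apply_compl hx).le) zero_le

lemma residual_comp_add_smul (h : IsStronglyUniformlyRecurrentOn K lam φ A) (hμ : μ Aᶜ = 0) :
    h.residual ∘ₘ μ + (μ Set.univ * lam) • φ = K ∘ₘ μ := by
  have hae : ∀ᵐ x ∂μ, x ∈ A := mem_ae_iff.mpr hμ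
  have hK : ∀ᵐ x ∂μ, K x = (h.residual + Kernel.const S (lam • φ)) x :=
    hae.mono fun x hx => (h.residual_add_smul hx).symm
  rw [Measure.comp_congr hK, Measure.add_comp, Measure.const_comp, smul_smul]

lemma residual_comp_compl (h : IsStronglyUniformlyRecurrentOn K lam φ A) (hμ : μ Aᶜ = 0) :
    (h.residual ∘ₘ μ) Aᶜ = 0 := by
  have hae : ∀ᵐ x ∂μ, x ∈ A := mem_ae_iff.mpr hμ
  rw [Measure.bind_apply h.measurableSet.compl h.residual.aemeasurable,
    lintegral_congr_ae (hae.mono fun x hx => h.residual_apply_compl hx), lintegral_zero]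

lemma residual_comp_univ (h : IsStronglyUniformlyRecurrentOn K lam φ A) (hμ : μ Aᶜ = 0) :
    (h.residual ∘ₘ μ) Set.univ = (1 - lam) * μ Set.univ := by
  have hae : ∀ᵐ x ∂μ, x ∈ A := mem_ae_iff.mpr hμ
  rw [Measure.bind_apply MeasurableSet.univ h.residual.aemeasurable,
    lintegral_congr_ae (hae.mono fun x hx => h.residual_apply_univ hx),
    MeasureTheory.lintegral_const]

lemma residual_iterComp_compl (h : IsStronglyUniformlyRecurrentOn K lam φ A) (hμ : μ Aᶜ = 0)
    (k : ℕ) : (h.residual.iterComp μ k) Aᶜ = 0 := by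
  induction k with
  | zero => rwa [iterComp_zero]
  | succ k ih => rw [iterComp_succ]; exact h.residual_comp_compl ih

lemma residual_iterComp_univ (h : IsStronglyUniformlyRecurrentOn K lam φ A) (hμ : μ Aᶜ = 0)
    (k : ℕ) : (h.residual.iterComp μ k) Set.univ = (1 - lam) ^ k * μ Set.univ := by
  induction k with
  | zero => rw [iterComp_zero, pow_zero, one_mul]
  | succ k ih =>
    rw [iterComp_succ, h.residual_comp_univ (h.residual_iterComp_compl hμ k), ih,
      pow_succ', mul_assoc]

noncomputable def regenerativeMeasure (h : IsStronglyUniformlyRecurrentOn K lam φ A) :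
    Measure S :=
  lam • Measure.sum (h.residual.iterComp φ)

lemma regenerativeMeasure_apply (h : IsStronglyUniformlyRecurrentOn K lam φ A)
    (hB : MeasurableSet B) :
    h.regenerativeMeasure B = lam * ∑' k, h.residual.iterComp φ k B := by
  rw [regenerativeMeasure, Measure.smul_apply, Measure.sum_apply _ hB, smul_eq_mul]

lemma regenerativeMeasure_compl (h : IsStronglyUniformlyRecurrentOn K lam φ A) :
    h.regenerativeMeasure Aᶜ = 0 := by
  simp [h.regenerativeMeasure_apply h.measurableSet.compl,
    h.residual_iterComp_compl h.measure_compl]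

lemma isProbabilityMeasure_regenerativeMeasure (h : IsStronglyUniformlyRecurrentOn K lam φ A) :
    IsProbabilityMeasure h.regenerativeMeasure := by
  constructor
  simp_rw [h.regenerativeMeasure_apply MeasurableSet.univ,
    h.residual_iterComp_univ h.measure_compl, measure_univ, mul_one]
  rw [ENNReal.tsum_one_sub_pow h.lam_le_one, ENNReal.mul_inv_cancel h.lam_pos.ne' h.lam_ne_top]

lemma invariant_regenerativeMeasure (h : IsStronglyUniformlyRecurrentOn K lam φ A) :
    K.Invariant h.regenerativeMeasure := by
  ext B hB
  have hstep : ∀ k, (K ∘ₘ h.residual.iterComp φ k) B =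
      h.residual.iterComp φ (k + 1) B + (1 - lam) ^ k * (lam * φ B) := fun k => by
    rw [← h.residual_comp_add_smul (h.residual_iterComp_compl h.measure_compl k),
      h.residual_iterComp_univ h.measure_compl, iterComp_succ, Measure.add_apply, Measure.smul_apply, smul_eq_mul, measure_univ, mul_one, mul_assoc]
  calc (K ∘ₘ h.regenerativeMeasure) B
      = lam * ∑' k, (K ∘ₘ h.residual.iterComp φ k) B := by
        rw [regenerativeMeasure, Measure.comp_smul, Measure.smul_apply,
          Measure.comp_sum_apply _ _ hB, smul_eq_mul]
    _ = lam * (∑' k, h.residual.iterComp φ (k + 1) B + φ B) := by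
        rw [tsum_congr hstep, ENNReal.tsum_add, ENNReal.tsum_mul_right,
          ENNReal.tsum_one_sub_pow h.lam_le_one, ENNReal.inv_mul_cancel_left h.lam_pos.ne'
            h.lam_ne_top]
    _ = h.regenerativeMeasure B := by
        rw [h.regenerativeMeasure_apply hB]
        conv_rhs => rw [tsum_eq_zero_add' ENNReal.summable, iterComp_zero, add_comm]

lemma residual_comp_add_smul_of_invariant (h : IsStronglyUniformlyRecurrentOn K lam φ A)
    [IsProbabilityMeasure μ] (hμA : μ Aᶜ = 0) (hμ : K.Invariant μ) :
    h.residual ∘ₘ μ + lam • φ = μ := by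
  simpa using (h.residual_comp_add_smul hμA).trans hμ

lemma smul_sum_add_iterComp_eq (h : IsStronglyUniformlyRecurrentOn K lam φ A)
    [IsProbabilityMeasure μ] (hμA : μ Aᶜ = 0) (hμ : K.Invariant μ) (k : ℕ) :
    lam • ∑ j ∈ Finset.range k, h.residual.iterComp φ j + h.residual.iterComp μ k = μ := by
  induction k with
  | zero => simp
  | succ k ih =>
    calc lam • ∑ j ∈ Finset.range (k + 1), h.residual.iterComp φ j
          + h.residual.iterComp μ (k + 1)
        = lam • ∑ j ∈ Finset.range k, h.residual.iterComp φ j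
          + h.residual.iterComp (h.residual ∘ₘ μ + lam • φ) k := by
          rw [Finset.sum_range_succ, smul_add, iterComp_succ', iterComp_add, iterComp_smul]
          abel
      _ = μ := by rw [h.residual_comp_add_smul_of_invariant hμA hμ, ih]

lemma regenerativeMeasure_le (h : IsStronglyUniformlyRecurrentOn K lam φ A)
    [IsProbabilityMeasure μ] (hμA : μ Aᶜ = 0) (hμ : K.Invariant μ) :
    h.regenerativeMeasure ≤ μ :=
  Measure.le_iff.mpr fun B hB => by
    rw [h.regenerativeMeasure_apply hB, ← ENNReal.tsum_mul_left]
    refine ENNReal.tsum_le_of_sum_range_le fun k => ?_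
    calc ∑ j ∈ Finset.range k, lam * h.residual.iterComp φ j B
        = (lam • ∑ j ∈ Finset.range k, h.residual.iterComp φ j) B := by
          simp [Measure.finsetSum_apply, Finset.mul_sum]
      _ ≤ μ B := by
          conv_rhs => rw [← h.smul_sum_add_iterComp_eq hμA hμ k]
          exact Measure.le_add_right le_rfl B

lemma eq_regenerativeMeasure (h : IsStronglyUniformlyRecurrentOn K lam φ A)
    [IsProbabilityMeasure μ] (hμA : μ Aᶜ = 0) (hμ : K.Invariant μ) :
    μ = h.regenerativeMeasure := by
  have := h.isProbabilityMeasure_regenerativeMeasure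
  exact (Measure.eq_of_le_of_measure_univ_eq (h.regenerativeMeasure_le hμA hμ) (by simp)).symm

lemma existsUnique_invariant (h : IsStronglyUniformlyRecurrentOn K lam φ A) :
    ∃! μ : Measure S, IsProbabilityMeasure μ ∧ μ Aᶜ = 0 ∧ K.Invariant μ :=
  ⟨h.regenerativeMeasure,
    ⟨h.isProbabilityMeasure_regenerativeMeasure, h.regenerativeMeasure_compl,
      h.invariant_regenerativeMeasure⟩,
    fun _ ⟨_, hμA, hμ⟩ => h.eq_regenerativeMeasure hμA hμ⟩

end IsStronglyUniformlyRecurrentOn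

section Escape

variable {R Q : Kernel S S} {A : Set S} (hA : MeasurableSet A) {φ : Measure S}

lemma restrict_add_restrict_compl (R : Kernel S S) :
    R.restrict hA + R.restrict hA.compl = R := by
  ext1 x
  exact Measure.restrict_add_restrict_compl hA

-- The part of `R.iterComp φ k` carried by paths that have left `A` by time `k`; the part carried
-- by paths that stayed in `A` is `(R.restrict hA).iterComp φ k`.
noncomputable def escapedIterComp (R : Kernel S S) (φ : Measure S) : ℕ → Measure S
  | 0 => 0
  | k + 1 => R ∘ₘ escapedIterComp R φ k + R.restrict hA.compl ∘ₘ (R.restrict hA).iterComp φ k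

lemma iterComp_eq_restrict_add_escaped (k : ℕ) :
    R.iterComp φ k = (R.restrict hA).iterComp φ k + escapedIterComp hA R φ k := by
  induction k with
  | zero => simp [escapedIterComp]
  | succ k ih =>
    have hsplit : R ∘ₘ (R.restrict hA).iterComp φ k = R.restrict hA ∘ₘ (R.restrict hA).iterComp φ k
        + R.restrict hA.compl ∘ₘ (R.restrict hA).iterComp φ k := by
      rw [← Measure.add_comp, restrict_add_restrict_compl]
    rw [iterComp_succ, ih, Measure.comp_add, hsplit, iterComp_succ, escapedIterComp]
    abel

lemma ae_mem_restrict_iterComp (hφ : φ Aᶜ = 0) (k : ℕ) :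
    ∀ᵐ x ∂(R.restrict hA).iterComp φ k, x ∈ A := by
  cases k with
  | zero => rw [iterComp_zero]; exact mem_ae_iff.mpr hφ
  | succ k =>
    rw [iterComp_succ]
    exact Measure.ae_comp_of_ae_ae hA (ae_of_all _ fun x => ae_restrict_mem hA)

lemma restrict_iterComp_le (hφ : φ Aᶜ = 0) (hRQ : ∀ x ∈ A, (R x).restrict A ≤ Q x) (k : ℕ) :
    (R.restrict hA).iterComp φ k ≤ Q.iterComp φ k := by
  induction k with
  | zero => simp
  | succ k ih =>
    rw [iterComp_succ, iterComp_succ]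
    exact Measure.comp_mono ih ((ae_mem_restrict_iterComp hA hφ k).mono hRQ)

lemma escapedIterComp_succ_univ {c : ℝ≥0∞} (hR : ∀ x, R x Set.univ = c) (k : ℕ) :
    escapedIterComp hA R φ (k + 1) Set.univ =
      c * escapedIterComp hA R φ k Set.univ + (R ∘ₘ (R.restrict hA).iterComp φ k) Aᶜ := by
  rw [escapedIterComp, Measure.add_apply,
    Measure.bind_apply MeasurableSet.univ R.aemeasurable,
    Measure.bind_apply MeasurableSet.univ (Kernel.aemeasurable _),
    Measure.bind_apply hA.compl R.aemeasurable]
  simp [hR, Kernel.restrict_apply]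

lemma iterComp_univ_of_forall {c : ℝ≥0∞} (hR : ∀ x, R x Set.univ = c) (μ : Measure S) (k : ℕ) :
    R.iterComp μ k Set.univ = c ^ k * μ Set.univ := by
  induction k with
  | zero => simp
  | succ k ih =>
    rw [iterComp_succ, Measure.bind_apply MeasurableSet.univ R.aemeasurable]
    simp [hR, ih, pow_succ', mul_assoc]

lemma tsum_iterComp_univ_ne_top [IsFiniteMeasure φ] {lam : ℝ≥0∞} (hlam : 0 < lam)
    (hlam1 : lam ≤ 1) (hR : ∀ x, R x Set.univ = 1 - lam) :
    ∑' k, R.iterComp φ k Set.univ ≠ ∞ := by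
  simp_rw [iterComp_univ_of_forall hR, ENNReal.tsum_mul_right, ENNReal.tsum_one_sub_pow hlam1]
  exact ENNReal.mul_ne_top (ENNReal.inv_ne_top.mpr hlam.ne') (measure_ne_top _ _)

lemma mul_tsum_escapedIterComp_univ_le [IsFiniteMeasure φ] {lam : ℝ≥0∞} (hlam : 0 < lam)
    (hlam1 : lam ≤ 1) (hR : ∀ x, R x Set.univ = 1 - lam) :
    lam * ∑' k, escapedIterComp hA R φ k Set.univ ≤ ∑' k, R.iterComp φ k Aᶜ := by
  have hle : ∀ k, (R.restrict hA).iterComp φ k ≤ R.iterComp φ k := fun k => by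
    conv_rhs => rw [iterComp_eq_restrict_add_escaped hA]
    exact Measure.le_add_right le_rfl
  have hfin : ∑' k, escapedIterComp hA R φ k Set.univ ≠ ∞ := by
    refine ne_top_of_le_ne_top (tsum_iterComp_univ_ne_top (φ := φ) hlam hlam1 hR)
      (ENNReal.tsum_le_tsum fun k => ?_)
    conv_rhs => rw [iterComp_eq_restrict_add_escaped hA]
    exact Measure.le_add_left le_rfl _
  rw [ENNReal.mul_tsum_eq_tsum_of_succ_eq hlam1 rfl (escapedIterComp_succ_univ hA hR) hfin]
  calc ∑' k, (R ∘ₘ (R.restrict hA).iterComp φ k) Aᶜ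
      ≤ ∑' k, R.iterComp φ (k + 1) Aᶜ := ENNReal.tsum_le_tsum fun k => by
        rw [iterComp_succ]; exact Measure.comp_mono (hle k) (ae_of_all _ fun _ => le_rfl) _
    _ ≤ ∑' k, R.iterComp φ k Aᶜ := by
        rw [tsum_eq_zero_add' (f := fun k => R.iterComp φ k Aᶜ) ENNReal.summable]
        exact le_add_self

lemma mul_tsum_iterComp_le_add [IsFiniteMeasure φ] {lam : ℝ≥0∞} (hA : MeasurableSet A)
    (hlam : 0 < lam) (hlam1 : lam ≤ 1) (hφ : φ Aᶜ = 0) (hR : ∀ x, R x Set.univ = 1 - lam)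
    (hRQ : ∀ x ∈ A, (R x).restrict A ≤ Q x) (B : Set S) :
    lam * ∑' k, R.iterComp φ k B ≤ lam * ∑' k, Q.iterComp φ k B + ∑' k, R.iterComp φ k Aᶜ := by
  calc lam * ∑' k, R.iterComp φ k B
      = lam * ∑' k, (R.restrict hA).iterComp φ k B
        + lam * ∑' k, escapedIterComp hA R φ k B := by
        have hsplit : ∀ k, R.iterComp φ k B =
            (R.restrict hA).iterComp φ k B + escapedIterComp hA R φ k B := fun k => by
          rw [iterComp_eq_restrict_add_escaped hA, Measure.add_apply]
        rw [tsum_congr hsplit, ENNReal.tsum_add, mul_add]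
    _ ≤ lam * ∑' k, Q.iterComp φ k B + lam * ∑' k, escapedIterComp hA R φ k Set.univ := by
        gcongr with k
        · exact restrict_iterComp_le hA hφ hRQ k
        · exact Set.subset_univ B
    _ ≤ lam * ∑' k, Q.iterComp φ k B + ∑' k, R.iterComp φ k Aᶜ := by
        gcongr
        exact mul_tsum_escapedIterComp_univ_le hA hlam hlam1 hR

end Escape

namespace IsStronglyUniformlyRecurrentOn

variable {P K : Kernel S S} {lam : ℝ≥0∞} {φ : Measure S} {A : Set S}
  [IsMarkovKernel P] [IsMarkovKernel K] [IsProbabilityMeasure φ]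

lemma restrict_residual_le (hP : IsStronglyUniformlyRecurrentOn P lam φ Set.univ)
    (hK : IsStronglyUniformlyRecurrentOn K lam φ A)
    (hge : ∀ x ∈ A, ∀ B ⊆ A, MeasurableSet B → P x B ≤ K x B) {x : S} (hx : x ∈ A) :
    (hP.residual x).restrict A ≤ hK.residual x := by
  refine Measure.le_iff.mpr fun B hB => ?_
  have hBA := hB.inter hK.measurableSet
  rw [Measure.restrict_apply hB, hP.residual_apply_of_mem (Set.mem_univ x),
    hP.sub_apply (Set.mem_univ x) hBA, hK.residual_apply_of_mem hx, hK.sub_apply hx hB,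
    measure_inter_conull hK.measure_compl]
  exact tsub_le_tsub_right ((hge x hx _ Set.inter_subset_right hBA).trans
    (measure_mono Set.inter_subset_left)) _

lemma regenerativeMeasure_le_add (hP : IsStronglyUniformlyRecurrentOn P lam φ Set.univ)
    (hK : IsStronglyUniformlyRecurrentOn K lam φ A)
    (hge : ∀ x ∈ A, ∀ B ⊆ A, MeasurableSet B → P x B ≤ K x B) {B : Set S}
    (hB : MeasurableSet B) :
    hP.regenerativeMeasure B ≤ hK.regenerativeMeasure B + lam⁻¹ * hP.regenerativeMeasure Aᶜ := by
  rw [hP.regenerativeMeasure_apply hB, hK.regenerativeMeasure_apply hB,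
    hP.regenerativeMeasure_apply hK.measurableSet.compl,
    ENNReal.inv_mul_cancel_left hP.lam_pos.ne' hP.lam_ne_top]
  exact mul_tsum_iterComp_le_add hK.measurableSet hP.lam_pos hP.lam_le_one hK.measure_compl
    (fun x => hP.residual_apply_univ (Set.mem_univ x))
    (fun x hx => restrict_residual_le hP hK hge hx) B

end IsStronglyUniformlyRecurrentOn

end ProbabilityTheory.Kernel

theorem strongly_uniformly_recurrent_general_augmentation_general
    {S : Type*} [MeasurableSpace S]
    (P : Kernel S S) [IsMarkovKernel P]
    (φ : Measure S) [IsProbabilityMeasure φ]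
    (lam : ℝ≥0∞) (hlam : 0 < lam)
    (hminor : ∀ x, ∀ B : Set S, MeasurableSet B → lam * φ B ≤ P x B)
    (π : Measure S) [IsProbabilityMeasure π]
    (hπ_stat : π.bind (fun x => P x) = π)
    (A : ℕ → Set S) (hA_meas : ∀ n, MeasurableSet (A n))
    (hA_mono : Monotone A) (hA_cover : ⋃ n, A n = Set.univ)
    (hφ_supp : φ (A 0)ᶜ = 0)
    (Pn : ℕ → Kernel S S) (hPn_markov : ∀ n, IsMarkovKernel (Pn n))
    (hPn_into : ∀ n, ∀ x ∈ A n, Pn n x (A n) = 1)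
    (hPn_ge : ∀ n, ∀ x ∈ A n, ∀ B ⊆ A n, MeasurableSet B → P x B ≤ Pn n x B) :
    (∀ n, ∀ x ∈ A n, ∀ B : Set S, MeasurableSet B → lam * φ B ≤ Pn n x B) ∧
    (∀ n, ∃! πn : Measure S, IsProbabilityMeasure πn ∧ πn (A n)ᶜ = 0 ∧
      πn.bind (fun x => Pn n x) = πn) ∧
    (∀ πn : ℕ → Measure S,
      (∀ n, IsProbabilityMeasure (πn n)) →
      (∀ n, πn n (A n)ᶜ = 0) →
      (∀ n, (πn n).bind (fun x => Pn n x) = πn n) →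
      Tendsto (fun n => ⨆ (B : Set S) (_ : MeasurableSet B),
        |(πn n B).toReal - (π B).toReal|) atTop (𝓝 0)) := by
  have hφ_compl n : φ (A n)ᶜ = 0 :=
    measure_mono_null (Set.compl_subset_compl.mpr (hA_mono (Nat.zero_le n))) hφ_supp
  have hP : P.IsStronglyUniformlyRecurrentOn lam φ Set.univ :=
    ⟨.univ, by simp, hlam, fun x _ => hminor x, fun x _ => measure_univ⟩
  have hPn n : (Pn n).IsStronglyUniformlyRecurrentOn lam φ (A n) :=
    .of_le (hA_meas n) (hφ_compl n) hlam hminor (hPn_into n) (hPn_ge n)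
  refine ⟨fun n => (hPn n).minorization, fun n => (hPn n).existsUnique_invariant,
    fun πn hπn_prob hπn_supp hπn_stat => ?_⟩
  have hπ : π = hP.regenerativeMeasure := hP.eq_regenerativeMeasure (by simp) hπ_stat
  have hπn n : πn n = (hPn n).regenerativeMeasure :=
    (hPn n).eq_regenerativeMeasure (hπn_supp n) (hπn_stat n)
  have hπ_compl : Tendsto (fun n => π (A n)ᶜ) atTop (𝓝 0) := by
    have := tendsto_measure_iInter_atTop (μ := π) (fun n => (hA_meas n).compl.nullMeasurableSet)
      (fun _ _ hmn => Set.compl_subset_compl.mpr (hA_mono hmn)) ⟨0, measure_ne_top _ _⟩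
    rwa [← Set.compl_iUnion, hA_cover, Set.compl_univ, measure_empty] at this
  refine tendsto_iSup_abs_sub_of_forall_le_add hπn_prob
    (by simpa using ENNReal.Tendsto.const_mul hπ_compl (.inr (ENNReal.inv_ne_top.mpr hlam.ne')))
    fun n B hB => ?_
  rw [hπ, hπn n]
  exact hP.regenerativeMeasure_le_add (hPn n) (hPn_ge n) hB

/-- Let `X` be strongly uniformly recurrent under `P`
(`P(x,·) ≥ λ φ` for all `x`) with unique stationary distribution `π`, and let `Pn` be
arbitrary general augmentations over any increasing truncation sequence `A n ↑ S`, with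
`φ` supported on the first truncation set. Then each `Pn` is strongly uniformly
recurrent on `A n` and has a unique stationary distribution, and any such stationary
distributions satisfy `sup_B |πn(B) - π(B)| → 0`. -/
theorem strongly_uniformly_recurrent_general_augmentation
    {S : Type*} [MeasurableSpace S]
    (P : Kernel S S) [IsMarkovKernel P]
    (φ : Measure S) [IsProbabilityMeasure φ]
    (lam : ℝ≥0∞) (hlam : 0 < lam)
    (hminor : ∀ x, ∀ B : Set S, MeasurableSet B → lam * φ B ≤ P x B)
    (π : Measure S) [IsProbabilityMeasure π]
    (hπ_stat : π.bind (fun x => P x) = π)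
    (hπ_unique : ∀ μ : Measure S, IsProbabilityMeasure μ →
      μ.bind (fun x => P x) = μ → μ = π)
    (A : ℕ → Set S) (hA_meas : ∀ n, MeasurableSet (A n))
    (hA_mono : Monotone A) (hA_cover : ⋃ n, A n = Set.univ)
    (hφ_supp : φ (A 0)ᶜ = 0)
    (Pn : ℕ → Kernel S S) (hPn_markov : ∀ n, IsMarkovKernel (Pn n))
    (hPn_into : ∀ n, ∀ x ∈ A n, Pn n x (A n) = 1)
    (hPn_ge : ∀ n, ∀ x ∈ A n, ∀ B ⊆ A n, MeasurableSet B → P x B ≤ Pn n x B) :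
    (∀ n, ∀ x ∈ A n, ∀ B : Set S, MeasurableSet B → lam * φ B ≤ Pn n x B) ∧
    (∀ n, ∃! πn : Measure S, IsProbabilityMeasure πn ∧ πn (A n)ᶜ = 0 ∧
      πn.bind (fun x => Pn n x) = πn) ∧
    (∀ πn : ℕ → Measure S,
      (∀ n, IsProbabilityMeasure (πn n)) →
      (∀ n, πn n (A n)ᶜ = 0) →
      (∀ n, (πn n).bind (fun x => Pn n x) = πn n) →
      Tendsto (fun n => ⨆ (B : Set S) (_ : MeasurableSet B),
        |(πn n B).toReal - (π B).toReal|) atTop (𝓝 0)) :=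
  strongly_uniformly_recurrent_general_augmentation_general P φ lam hlam hminor π hπ_stat A hA_meas
    hA_mono hA_cover hφ_supp Pn hPn_markov hPn_into hPn_ge
end

section
/- In the regenerative split-chain construction, if τ is the first regeneration time (geometric with success probability λ at each step), then under both P_φ and the augmented measure P_φ^n one has E[τ²] ≤ 2/λ², and |E_φ^n ∑_{j=0}^{τ−1} I(X_j ∈ B) − E_φ ∑_{j=0}^{τ−1} I(X_j ∈ B)| ≤ 2 (2/λ²)^{1/2} P_φ(τ > β_n)^{1/2} uniformly in B, where β_n is the first time the chain uses the augmentation residual kernel. -/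
open MeasureTheory Filter Classical
open scoped BigOperators ENNReal

/-!
For a geometric time, `E τ² = ∑ (k+1)² λ(1-λ)^k ≤ ∑ (k+1)(k+2) λ(1-λ)^k = 2/λ²`.
Split the visits to `B` before `τ` into those at times `j < βₙ`, whose expected number is the
same under both measures by the coupling, and those at times `βₙ ≤ j < τ`, whose number is at
most `τ · 1{βₙ < τ}`; by Cauchy–Schwarz the expectation of the latter is at most
`(E τ²)^{1/2} P(βₙ < τ)^{1/2}` under either measure, which bounds the difference.
-/

lemma hasSum_succ_mul_succ_succ_mul_geometric {r : ℝ} (hr : ‖r‖ < 1) :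
    HasSum (fun n : ℕ => ((n : ℝ) + 1) * ((n : ℝ) + 2) * r ^ n) (2 / (1 - r) ^ 3) := by
  have h := (hasSum_choose_mul_geometric_of_norm_lt_one 2 hr).mul_left 2
  rw [show (2 : ℝ) * (1 / (1 - r) ^ (2 + 1)) = 2 / (1 - r) ^ 3 by ring] at h
  refine h.congr_fun fun n => ?_
  rw [Nat.cast_choose_two]
  push_cast
  ring

lemma tsum_ofReal_sq_mul_geometric_le {lam : ℝ} (h0 : 0 < lam) (h1 : lam ≤ 1) :
    ∑' k : ℕ, ENNReal.ofReal (((k : ℝ) + 1) ^ 2 * (lam * (1 - lam) ^ k))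
      ≤ ENNReal.ofReal (2 / lam ^ 2) := by
  have hr0 : 0 ≤ 1 - lam := by linarith
  have hsum : HasSum (fun k : ℕ => lam * (((k : ℝ) + 1) * ((k : ℝ) + 2) * (1 - lam) ^ k))
      (2 / lam ^ 2) := by
    have h := (hasSum_succ_mul_succ_succ_mul_geometric
      (r := 1 - lam) (by rw [Real.norm_of_nonneg hr0]; linarith)).mul_left lam
    rwa [sub_sub_cancel, show lam * (2 / lam ^ 3) = 2 / lam ^ 2 by field_simp] at h
  calc ∑' k : ℕ, ENNReal.ofReal (((k : ℝ) + 1) ^ 2 * (lam * (1 - lam) ^ k))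
      ≤ ∑' k : ℕ, ENNReal.ofReal (lam * (((k : ℝ) + 1) * ((k : ℝ) + 2) * (1 - lam) ^ k)) := by
        refine ENNReal.tsum_le_tsum fun k => ENNReal.ofReal_le_ofReal ?_
        have : 0 ≤ lam * (1 - lam) ^ k := by positivity
        nlinarith
    _ = ENNReal.ofReal (2 / lam ^ 2) := by
        rw [← ENNReal.ofReal_tsum_of_nonneg (fun k => by positivity) hsum.summable,
          hsum.tsum_eq]

lemma lintegral_sq_le_of_geometric {Ω : Type*} [MeasurableSpace Ω] (m : Measure Ω)
    {τ : Ω → ℕ} (hτ : Measurable τ) {lam : ℝ} (h0 : 0 < lam) (h1 : lam ≤ 1)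
    (hg : ∀ k : ℕ, m {ω | τ ω = k + 1} = ENNReal.ofReal (lam * (1 - lam) ^ k)) :
    ∫⁻ ω, (τ ω : ℝ≥0∞) ^ 2 ∂m ≤ ENNReal.ofReal (2 / lam ^ 2) := by
  have hlaw : ∫⁻ ω, (τ ω : ℝ≥0∞) ^ 2 ∂m = ∑' n : ℕ, (n : ℝ≥0∞) ^ 2 * m {ω | τ ω = n} := by
    rw [← lintegral_map (f := fun n : ℕ => (n : ℝ≥0∞) ^ 2) (measurable_of_countable _) hτ,
      lintegral_countable']
    refine tsum_congr fun n => ?_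
    rw [Measure.map_apply hτ (measurableSet_singleton n)]
    rfl
  calc ∫⁻ ω, (τ ω : ℝ≥0∞) ^ 2 ∂m
      = ∑' k : ℕ, ((k + 1 : ℕ) : ℝ≥0∞) ^ 2 * m {ω | τ ω = k + 1} := by
        rw [hlaw, tsum_eq_zero_add' ENNReal.summable]
        simp
    _ = ∑' k : ℕ, ENNReal.ofReal (((k : ℝ) + 1) ^ 2 * (lam * (1 - lam) ^ k)) := by
        refine tsum_congr fun k => ?_
        rw [hg, ENNReal.ofReal_mul (p := ((k : ℝ) + 1) ^ 2) (by positivity),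
          ENNReal.ofReal_pow (by positivity), ← ENNReal.ofReal_natCast]
        push_cast
        rfl
    _ ≤ ENNReal.ofReal (2 / lam ^ 2) := tsum_ofReal_sq_mul_geometric_le h0 h1

lemma integral_sq_le_of_geometric {Ω : Type*} [MeasurableSpace Ω] (m : Measure Ω)
    {τ : Ω → ℕ} (hτ : Measurable τ) {lam : ℝ} (h0 : 0 < lam) (h1 : lam ≤ 1)
    (hg : ∀ k : ℕ, m {ω | τ ω = k + 1} = ENNReal.ofReal (lam * (1 - lam) ^ k)) :
    ∫ ω, (τ ω : ℝ) ^ 2 ∂m ≤ 2 / lam ^ 2 := by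
  rw [integral_eq_lintegral_of_nonneg_ae (ae_of_all _ fun ω => by positivity)
    (by fun_prop : Measurable fun ω => (τ ω : ℝ) ^ 2).aestronglyMeasurable]
  refine ENNReal.toReal_le_of_le_ofReal (by positivity) ?_
  convert lintegral_sq_le_of_geometric m hτ h0 h1 hg using 3 with ω
  rw [ENNReal.ofReal_pow (by positivity), ENNReal.ofReal_natCast]

lemma setLIntegral_le_sqrt_lintegral_sq_mul_sqrt_measure {Ω : Type*} [MeasurableSpace Ω]
    (m : Measure Ω) {f : Ω → ℝ≥0∞} (hf : AEMeasurable f m) {E : Set Ω} (hE : MeasurableSet E) :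
    ∫⁻ ω in E, f ω ∂m ≤ (∫⁻ ω, f ω ^ 2 ∂m) ^ (1 / 2 : ℝ) * m E ^ (1 / 2 : ℝ) := by
  have hsq : ∀ x : ℝ≥0∞, x ^ (2 : ℝ) = x ^ 2 := fun x => ENNReal.rpow_ofNat x 2
  have hE1 : ∫⁻ ω, E.indicator 1 ω ^ (2 : ℝ) ∂m = m E := by
    rw [← lintegral_indicator_one hE]
    refine lintegral_congr fun ω => ?_
    by_cases hω : ω ∈ E <;> simp [hω]
  calc ∫⁻ ω in E, f ω ∂m = ∫⁻ ω, f ω * E.indicator 1 ω ∂m := by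
        rw [← lintegral_indicator hE]
        refine lintegral_congr fun ω => ?_
        by_cases hω : ω ∈ E <;> simp [hω]
    _ ≤ (∫⁻ ω, f ω ^ (2 : ℝ) ∂m) ^ (1 / 2 : ℝ)
          * (∫⁻ ω, E.indicator 1 ω ^ (2 : ℝ) ∂m) ^ (1 / 2 : ℝ) :=
        ENNReal.lintegral_mul_le_Lp_mul_Lq m .two_two hf (aemeasurable_one.indicator hE)
    _ = (∫⁻ ω, f ω ^ 2 ∂m) ^ (1 / 2 : ℝ) * m E ^ (1 / 2 : ℝ) := by simp_rw [hE1, hsq]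

noncomputable def occupationCount {Ω : Type*} (A : ℕ → Set Ω) (ω : Ω) : ℝ≥0∞ :=
  ∑' j, (A j).indicator 1 ω

section OccupationCount

variable {Ω : Type*} {A A' : ℕ → Set Ω}

lemma occupationCount_le {ω : Ω} {n : ℕ} (h : ∀ j, ω ∈ A j → j < n) :
    occupationCount A ω ≤ n := by
  unfold occupationCount
  rw [tsum_eq_sum (s := Finset.range n) fun j hj => Set.indicator_of_notMem
    (fun hω => hj (Finset.mem_range.2 (h j hω))) _]
  calc ∑ j ∈ Finset.range n, (A j).indicator 1 ω ≤ ∑ j ∈ Finset.range n, (1 : ℝ≥0∞) :=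
        Finset.sum_le_sum fun j _ => Set.indicator_le_self' (fun _ _ => zero_le_one) ω
    _ = n := by simp

lemma occupationCount_union (hd : ∀ j, Disjoint (A j) (A' j)) (ω : Ω) :
    occupationCount (fun j => A j ∪ A' j) ω = occupationCount A ω + occupationCount A' ω := by
  simp only [occupationCount, Set.indicator_union_of_disjoint (hd _)]
  exact ENNReal.tsum_add

variable [MeasurableSpace Ω]

lemma measurable_occupationCount (hA : ∀ j, MeasurableSet (A j)) :
    Measurable (occupationCount A) :=
  Measurable.tsum fun j => measurable_one.indicator (hA j)

lemma lintegral_occupationCount (m : Measure Ω) (hA : ∀ j, MeasurableSet (A j)) :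
    ∫⁻ ω, occupationCount A ω ∂m = ∑' j, m (A j) := by
  simp only [occupationCount]
  rw [lintegral_tsum fun j => (measurable_one.indicator (hA j)).aemeasurable]
  exact tsum_congr fun j => lintegral_indicator_one (hA j)

lemma lintegral_occupationCount_le_lintegral_sq (m : Measure Ω) {τ : Ω → ℕ}
    (h : ∀ j ω, ω ∈ A j → j < τ ω) :
    ∫⁻ ω, occupationCount A ω ∂m ≤ ∫⁻ ω, (τ ω : ℝ≥0∞) ^ 2 ∂m := by
  refine lintegral_mono fun ω => (occupationCount_le (h · ω)).trans ?_
  exact_mod_cast Nat.le_self_pow two_ne_zero (τ ω)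

end OccupationCount

lemma ofReal_sum_range_ite_eq_occupationCount {Ω S : Type*} (X : ℕ → Ω → S) (B : Set S)
    (τ : Ω → ℕ) (ω : Ω) :
    ENNReal.ofReal (∑ j ∈ Finset.range (τ ω), if X j ω ∈ B then (1 : ℝ) else 0)
      = occupationCount (fun j => {ω | X j ω ∈ B ∧ j < τ ω}) ω := by
  unfold occupationCount
  rw [ENNReal.ofReal_sum_of_nonneg fun j _ => by positivity,
    tsum_eq_sum (s := Finset.range (τ ω)) fun j hj => Set.indicator_of_notMem
      (fun hω => hj (Finset.mem_range.2 hω.2)) _]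
  refine Finset.sum_congr rfl fun j hj => ?_
  by_cases hX : X j ω ∈ B <;> simp [hX, Finset.mem_range.1 hj]

lemma abs_toReal_add_sub_toReal_add_le {a b c K : ℝ≥0∞} (ha : a ≠ ∞) (hK : K ≠ ∞)
    (hb : b ≤ K) (hc : c ≤ K) : |(a + b).toReal - (a + c).toReal| ≤ K.toReal := by
  rw [ENNReal.toReal_add ha (ne_top_of_le_ne_top hK hb),
    ENNReal.toReal_add ha (ne_top_of_le_ne_top hK hc), add_sub_add_left_eq_sub, abs_le]
  have hb' := ENNReal.toReal_mono hK hb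
  have hc' := ENNReal.toReal_mono hK hc
  constructor <;> linarith [b.toReal_nonneg, c.toReal_nonneg]

section SplitChain

variable {Ω S : Type*} (X : ℕ → Ω → S) (B : Set S) (τ β : Ω → ℕ)

def coupledVisits (j : ℕ) : Set Ω := {ω | X j ω ∈ B ∧ j < τ ω ∧ j < β ω}

def decoupledVisits (j : ℕ) : Set Ω := {ω | X j ω ∈ B ∧ j < τ ω ∧ β ω ≤ j}

variable {X B τ β}

lemma ofReal_sum_range_ite_eq_coupled_add_decoupled (ω : Ω) :
    ENNReal.ofReal (∑ j ∈ Finset.range (τ ω), if X j ω ∈ B then (1 : ℝ) else 0)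
      = occupationCount (coupledVisits X B τ β) ω
        + occupationCount (decoupledVisits X B τ β) ω := by
  rw [ofReal_sum_range_ite_eq_occupationCount, ← occupationCount_union]
  · congr with j ω'
    simp only [coupledVisits, decoupledVisits, Set.mem_union, Set.mem_ofPred_eq]
    have := lt_or_ge j (β ω')
    tauto
  · intro j
    rw [Set.disjoint_left]
    rintro ω' ⟨-, -, hlt⟩ ⟨-, -, hle⟩
    omega

variable [MeasurableSpace Ω]

lemma lintegral_occupationCount_decoupledVisits_le (m : Measure Ω) (hτ : Measurable τ)
    (hβ : Measurable β) {M : ℝ≥0∞} (hM : ∫⁻ ω, (τ ω : ℝ≥0∞) ^ 2 ∂m ≤ M) :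
    ∫⁻ ω, occupationCount (decoupledVisits X B τ β) ω ∂m
      ≤ M ^ (1 / 2 : ℝ) * m {ω | β ω < τ ω} ^ (1 / 2 : ℝ) := by
  set E := {ω | β ω < τ ω}
  calc ∫⁻ ω, occupationCount (decoupledVisits X B τ β) ω ∂m
      ≤ ∫⁻ ω, E.indicator (fun ω => (τ ω : ℝ≥0∞)) ω ∂m := by
        refine lintegral_mono fun ω => ?_
        by_cases hω : ω ∈ E
        · rw [Set.indicator_of_mem hω]
          exact occupationCount_le fun j hj => hj.2.1
        · rw [Set.indicator_of_notMem hω]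
          simpa using occupationCount_le (n := 0) fun j hj =>
            absurd (hj.2.2.trans_lt hj.2.1) hω
    _ = ∫⁻ ω in E, (τ ω : ℝ≥0∞) ∂m := lintegral_indicator (measurableSet_lt hβ hτ) _
    _ ≤ (∫⁻ ω, (τ ω : ℝ≥0∞) ^ 2 ∂m) ^ (1 / 2 : ℝ) * m E ^ (1 / 2 : ℝ) :=
        setLIntegral_le_sqrt_lintegral_sq_mul_sqrt_measure m (by fun_prop)
          (measurableSet_lt hβ hτ)
    _ ≤ M ^ (1 / 2 : ℝ) * m E ^ (1 / 2 : ℝ) := by gcongr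

variable [MeasurableSpace S]

lemma measurableSet_coupledVisits (hX : ∀ j, Measurable (X j)) (hB : MeasurableSet B)
    (hτ : Measurable τ) (hβ : Measurable β) (j : ℕ) :
    MeasurableSet (coupledVisits X B τ β j) :=
  (hX j hB).inter ((measurableSet_lt measurable_const hτ).inter
    (measurableSet_lt measurable_const hβ))

lemma measurableSet_decoupledVisits (hX : ∀ j, Measurable (X j)) (hB : MeasurableSet B)
    (hτ : Measurable τ) (hβ : Measurable β) (j : ℕ) :
    MeasurableSet (decoupledVisits X B τ β j) :=
  (hX j hB).inter ((measurableSet_lt measurable_const hτ).inter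
    (measurableSet_le hβ measurable_const))

lemma integral_sum_range_ite_eq_coupled_add_decoupled (m : Measure Ω)
    (hX : ∀ j, Measurable (X j)) (hB : MeasurableSet B) (hτ : Measurable τ)
    (hβ : Measurable β) :
    ∫ ω, (∑ j ∈ Finset.range (τ ω), if X j ω ∈ B then (1 : ℝ) else 0) ∂m
      = (∫⁻ ω, occupationCount (coupledVisits X B τ β) ω ∂m
        + ∫⁻ ω, occupationCount (decoupledVisits X B τ β) ω ∂m).toReal := by
  have hcoupled := measurable_occupationCount (measurableSet_coupledVisits hX hB hτ hβ)
  have hdecoupled := measurable_occupationCount (measurableSet_decoupledVisits hX hB hτ hβ)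
  calc ∫ ω, (∑ j ∈ Finset.range (τ ω), if X j ω ∈ B then (1 : ℝ) else 0) ∂m
      = ∫ ω, (occupationCount (coupledVisits X B τ β) ω
          + occupationCount (decoupledVisits X B τ β) ω).toReal ∂m :=
        integral_congr_ae (ae_of_all _ fun ω => by
          dsimp only
          rw [← ofReal_sum_range_ite_eq_coupled_add_decoupled,
            ENNReal.toReal_ofReal (by positivity)])
    _ = (∫⁻ ω, occupationCount (coupledVisits X B τ β) ω
          + occupationCount (decoupledVisits X B τ β) ω ∂m).toReal :=
        integral_toReal (hcoupled.add hdecoupled).aemeasurable (ae_of_all _ fun ω => by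
          rw [← ofReal_sum_range_ite_eq_coupled_add_decoupled]
          exact ENNReal.ofReal_lt_top)
    _ = _ := by rw [lintegral_add_left hcoupled]

end SplitChain

theorem split_chain_cycle_bound_general
    {Ω : Type*} [MeasurableSpace Ω] {S : Type*} [MeasurableSpace S]
    (μ ν : Measure Ω) [IsProbabilityMeasure μ]
    (X : ℕ → Ω → S) (hX : ∀ j, Measurable (X j))
    (τ βn : Ω → ℕ) (hτ : Measurable τ) (hβ : Measurable βn)
    (lam : ℝ) (hlam0 : 0 < lam) (hlam1 : lam ≤ 1)
    (hgeomμ : ∀ k : ℕ, μ {ω | τ ω = k + 1} = ENNReal.ofReal (lam * (1 - lam) ^ k))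
    (hgeomν : ∀ k : ℕ, ν {ω | τ ω = k + 1} = ENNReal.ofReal (lam * (1 - lam) ^ k))
    (hagree : ∀ (j : ℕ) (B : Set S), MeasurableSet B →
      μ {ω | X j ω ∈ B ∧ j < τ ω ∧ j < βn ω} = ν {ω | X j ω ∈ B ∧ j < τ ω ∧ j < βn ω})
    (hcross : ν {ω | βn ω < τ ω} = μ {ω | βn ω < τ ω}) :
    (∫ ω, ((τ ω : ℝ)) ^ 2 ∂μ ≤ 2 / lam ^ 2) ∧
    (∫ ω, ((τ ω : ℝ)) ^ 2 ∂ν ≤ 2 / lam ^ 2) ∧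
    (∀ B : Set S, MeasurableSet B →
      |(∫ ω, (∑ j ∈ Finset.range (τ ω), if X j ω ∈ B then (1 : ℝ) else 0) ∂ν)
        - (∫ ω, (∑ j ∈ Finset.range (τ ω), if X j ω ∈ B then (1 : ℝ) else 0) ∂μ)|
      ≤ 2 * Real.sqrt (2 / lam ^ 2) *
          Real.sqrt ((μ {ω | βn ω < τ ω}).toReal)) := by
  refine ⟨integral_sq_le_of_geometric μ hτ hlam0 hlam1 hgeomμ,
    integral_sq_le_of_geometric ν hτ hlam0 hlam1 hgeomν, fun B hB => ?_⟩
  have hmomμ := lintegral_sq_le_of_geometric μ hτ hlam0 hlam1 hgeomμ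
  have hmomν := lintegral_sq_le_of_geometric ν hτ hlam0 hlam1 hgeomν
  set K := ENNReal.ofReal (2 / lam ^ 2) ^ (1 / 2 : ℝ) * μ {ω | βn ω < τ ω} ^ (1 / 2 : ℝ)
  have hK : K ≠ ∞ := by finiteness
  have hcoupled : ∫⁻ ω, occupationCount (coupledVisits X B τ βn) ω ∂ν
      = ∫⁻ ω, occupationCount (coupledVisits X B τ βn) ω ∂μ := by
    rw [lintegral_occupationCount ν (measurableSet_coupledVisits hX hB hτ hβ),
      lintegral_occupationCount μ (measurableSet_coupledVisits hX hB hτ hβ)]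
    exact tsum_congr fun j => (hagree j B hB).symm
  have hcoupled_fin := ne_top_of_le_ne_top ENNReal.ofReal_ne_top
    ((lintegral_occupationCount_le_lintegral_sq μ (A := coupledVisits X B τ βn)
      fun j ω hω => hω.2.1).trans hmomμ)
  have hdecoupledν : ∫⁻ ω, occupationCount (decoupledVisits X B τ βn) ω ∂ν ≤ K :=
    (lintegral_occupationCount_decoupledVisits_le ν hτ hβ hmomν).trans_eq (by rw [hcross])
  have hdecoupledμ : ∫⁻ ω, occupationCount (decoupledVisits X B τ βn) ω ∂μ ≤ K :=
    lintegral_occupationCount_decoupledVisits_le μ hτ hβ hmomμ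
  rw [integral_sum_range_ite_eq_coupled_add_decoupled ν hX hB hτ hβ,
    integral_sum_range_ite_eq_coupled_add_decoupled μ hX hB hτ hβ, hcoupled]
  calc _ ≤ K.toReal :=
        abs_toReal_add_sub_toReal_add_le hcoupled_fin hK hdecoupledν hdecoupledμ
    _ = Real.sqrt (2 / lam ^ 2) * Real.sqrt ((μ {ω | βn ω < τ ω}).toReal) := by
      rw [ENNReal.toReal_mul, ← ENNReal.toReal_rpow, ← ENNReal.toReal_rpow,
        ENNReal.toReal_ofReal (by positivity), ← Real.sqrt_eq_rpow, ← Real.sqrt_eq_rpow]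
    _ ≤ _ := by rw [mul_assoc]; exact le_mul_of_one_le_left (by positivity) one_le_two

/-- In the regenerative split-chain construction, if `τ` is the first
regeneration time (geometric with success probability `λ` at each step) under both `P_φ`
(measure `μ`) and the augmented dynamics `P_φⁿ` (measure `ν`), the two dynamics agreeing
up to `min(τ, βₙ)` where `βₙ` is the first time the augmentation residual kernel is
used, then `E[τ²] ≤ 2/λ²` under both measures, and uniformly in `B`,
`|E_φⁿ ∑_{j<τ} 1(X_j ∈ B) - E_φ ∑_{j<τ} 1(X_j ∈ B)| ≤ 2 (2/λ²)^{1/2} P_φ(τ > βₙ)^{1/2}`. -/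
theorem split_chain_cycle_bound
    {Ω : Type*} [MeasurableSpace Ω] {S : Type*} [MeasurableSpace S]
    (μ ν : Measure Ω) [IsProbabilityMeasure μ] [IsProbabilityMeasure ν]
    (X : ℕ → Ω → S) (hX : ∀ j, Measurable (X j))
    (τ βn : Ω → ℕ) (hτ : Measurable τ) (hβ : Measurable βn)
    (lam : ℝ) (hlam0 : 0 < lam) (hlam1 : lam ≤ 1)
    (hgeomμ : ∀ k : ℕ, μ {ω | τ ω = k + 1} = ENNReal.ofReal (lam * (1 - lam) ^ k))
    (hgeomν : ∀ k : ℕ, ν {ω | τ ω = k + 1} = ENNReal.ofReal (lam * (1 - lam) ^ k))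
    (hτpos : ∀ ω, 1 ≤ τ ω)
    (hagree : ∀ (j : ℕ) (B : Set S), MeasurableSet B →
      μ {ω | X j ω ∈ B ∧ j < τ ω ∧ j < βn ω} = ν {ω | X j ω ∈ B ∧ j < τ ω ∧ j < βn ω})
    (hcross : ν {ω | βn ω < τ ω} = μ {ω | βn ω < τ ω}) :
    (∫ ω, ((τ ω : ℝ)) ^ 2 ∂μ ≤ 2 / lam ^ 2) ∧
    (∫ ω, ((τ ω : ℝ)) ^ 2 ∂ν ≤ 2 / lam ^ 2) ∧
    (∀ B : Set S, MeasurableSet B →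
      |(∫ ω, (∑ j ∈ Finset.range (τ ω), if X j ω ∈ B then (1 : ℝ) else 0) ∂ν)
        - (∫ ω, (∑ j ∈ Finset.range (τ ω), if X j ω ∈ B then (1 : ℝ) else 0) ∂μ)|
      ≤ 2 * Real.sqrt (2 / lam ^ 2) *
          Real.sqrt ((μ {ω | βn ω < τ ω}).toReal)) :=
  split_chain_cycle_bound_general μ ν X hX τ βn hτ hβ lam hlam0 hlam1 hgeomμ hgeomν hagree hcross
end
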